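/- Let f : [a,b] → ℝ be Riemann integrable on [a,b]. Then F : [a,b] → ℝ is a generalized primitive of f if and only if for each x₀ ∈ [a,b] there exists c ∈ ℝ such that F(x) = c + ∫_{x₀}^x f(y) dy for all x ∈ [a,b]. -/

import Mathlib

noncomputable section

/-- A partition of `[a, b]` given by points `x 0 = a < x 1 < ⋯ < x n = b`. -/
def IsPartition (a b : ℝ) (n : ℕ) (x : ℕ → ℝ) : Prop :=
  x 0 = a ∧ x n = b ∧ ∀ i < n, x i < x (i + 1)

/-- The lower Darboux sum of `f` associated to the partition points `x 0, …, x n`. -/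
noncomputable def lowerSum (f : ℝ → ℝ) (n : ℕ) (x : ℕ → ℝ) : ℝ :=
  ∑ i ∈ Finset.range n, sInf (f '' Set.Icc (x i) (x (i + 1))) * (x (i + 1) - x i)

/-- The upper Darboux sum of `f` associated to the partition points `x 0, …, x n`. -/
noncomputable def upperSum (f : ℝ → ℝ) (n : ℕ) (x : ℕ → ℝ) : ℝ :=
  ∑ i ∈ Finset.range n, sSup (f '' Set.Icc (x i) (x (i + 1))) * (x (i + 1) - x i)

/-- The lower Darboux integral of `f` over `[a, b]`: the supremum of the lower sums. -/
noncomputable def lowerDarboux (f : ℝ → ℝ) (a b : ℝ) : ℝ :=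
  sSup {s : ℝ | ∃ n x, IsPartition a b n x ∧ s = lowerSum f n x}

/-- The upper Darboux integral of `f` over `[a, b]`: the infimum of the upper sums. -/
noncomputable def upperDarboux (f : ℝ → ℝ) (a b : ℝ) : ℝ :=
  sInf {s : ℝ | ∃ n x, IsPartition a b n x ∧ s = upperSum f n x}

/-- `f` is bounded on the set `s`. -/
def BoundedOn (f : ℝ → ℝ) (s : Set ℝ) : Prop := ∃ M : ℝ, ∀ x ∈ s, |f x| ≤ M

/-- `f` is Riemann integrable on `[a, b]`: it is bounded there and its lower and upper
Darboux integrals coincide. -/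
def RiemannIntegrableOn (f : ℝ → ℝ) (a b : ℝ) : Prop :=
  BoundedOn f (Set.Icc a b) ∧ lowerDarboux f a b = upperDarboux f a b

/-- The oriented Riemann integral `∫_u^v f`: for `u ≤ v` it is the (lower) Darboux integral
over `[u, v]` (equal to the upper one when `f` is Riemann integrable, and `0` when `u = v`),
and for `v < u` it is minus the integral over `[v, u]`. -/
noncomputable def riemannIntegral (f : ℝ → ℝ) (u v : ℝ) : ℝ :=
  if u ≤ v then lowerDarboux f u v else -lowerDarboux f v u

/-- `F` is a generalized primitive of `f` on `[a, b]`: for all `x < y` in `[a, b]`,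
`inf_{[x,y]} f ≤ (F y - F x)/(y - x) ≤ sup_{[x,y]} f`. -/
def IsGenPrimitive (a b : ℝ) (f F : ℝ → ℝ) : Prop :=
  ∀ x ∈ Set.Icc a b, ∀ y ∈ Set.Icc a b, x < y →
    sInf (f '' Set.Icc x y) ≤ (F y - F x) / (y - x) ∧
      (F y - F x) / (y - x) ≤ sSup (f '' Set.Icc x y)

/-!
Telescoping the defining inequality of a generalized primitive `F` over a partition of
`[u, v] ⊆ [a, b]` gives `lowerSum ≤ F v - F u ≤ upperSum`; hence `F v - F u` lies between the
lower and upper Darboux integrals on every subinterval. For `a ≤ u ≤ v ≤ b` the three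
increments of `F` over `[a, u]`, `[u, v]`, `[v, b]` therefore each dominate the corresponding
lower integral, while their sum `F b - F a` is at most the upper integral over `[a, b]`, which
equals the lower one and, by subadditivity of the lower integral, is at most the sum of the three
lower integrals. So every increment of `F` equals the lower integral. Subadditivity is proved by
induction on the number of partition points, splitting the last subinterval at the cut point
when it falls inside it. Conversely, `inf f * (v - u) ≤ ∫_u^v f ≤ sup f * (v - u)` shows that
an indefinite integral is a generalized primitive.
-/

open Set

section Partition

variable {u v w : ℝ} {n : ℕ} {x : ℕ → ℝ}

theorem IsPartition.strictMonoOn (hx : IsPartition u v n x) : StrictMonoOn x (Iic n) :=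
  strictMonoOn_Iic_of_lt_succ fun i hi => by simpa [Order.succ_eq_add_one] using hx.2.2 i hi

theorem IsPartition.mem_Icc (hx : IsPartition u v n x) {i : ℕ} (hi : i ≤ n) :
    x i ∈ Icc u v := by
  have hmono := hx.strictMonoOn.monotoneOn
  refine ⟨?_, ?_⟩
  · simpa [hx.1] using hmono (show 0 ∈ Iic n from Nat.zero_le n) hi (Nat.zero_le i)
  · simpa [hx.2.1] using hmono hi (mem_Iic.mpr le_rfl) hi

theorem IsPartition.le (hx : IsPartition u v n x) : u ≤ v :=
  hx.1 ▸ (hx.mem_Icc (Nat.zero_le n)).2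

theorem IsPartition.Icc_subset (hx : IsPartition u v n x) {i : ℕ} (hi : i < n) :
    Icc (x i) (x (i + 1)) ⊆ Icc u v :=
  Icc_subset_Icc (hx.mem_Icc hi.le).1 (hx.mem_Icc hi).2

theorem IsPartition.sum_sub_eq (hx : IsPartition u v n x) (g : ℝ → ℝ) :
    ∑ i ∈ Finset.range n, (g (x (i + 1)) - g (x i)) = g v - g u := by
  rw [Finset.sum_range_sub (fun i => g (x i)), hx.1, hx.2.1]

theorem isPartition_zero (u : ℝ) : IsPartition u u 0 (fun _ => u) :=
  ⟨rfl, rfl, fun _ hi => absurd hi (Nat.not_lt_zero _)⟩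

theorem IsPartition.update (hx : IsPartition u v n x) (hvw : v < w) :
    IsPartition u w (n + 1) (Function.update x (n + 1) w) := by
  refine ⟨by simp [hx.1], by simp, fun i hi => ?_⟩
  rcases Nat.lt_succ_iff_lt_or_eq.mp hi with hi | rfl
  · simpa [Function.update_of_ne (show i ≠ n + 1 by omega),
      Function.update_of_ne (show i + 1 ≠ n + 1 by omega)] using hx.2.2 i hi
  · simpa [hx.2.1] using hvw

theorem IsPartition.init (hx : IsPartition u w (n + 1) x) : IsPartition u (x n) n x :=
  ⟨hx.1, rfl, fun i hi => hx.2.2 i (hi.trans n.lt_succ_self)⟩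

theorem exists_isPartition (huv : u ≤ v) : ∃ n x, IsPartition u v n x := by
  rcases huv.eq_or_lt with rfl | huv
  · exact ⟨0, _, isPartition_zero u⟩
  · exact ⟨1, _, (isPartition_zero u).update huv⟩

end Partition

section BoundedOn

variable {f : ℝ → ℝ} {s t : Set ℝ}

theorem BoundedOn.mono (hf : BoundedOn f t) (hst : s ⊆ t) : BoundedOn f s :=
  let ⟨M, hM⟩ := hf; ⟨M, fun y hy => hM y (hst hy)⟩

theorem BoundedOn.bddAbove_image (hf : BoundedOn f s) : BddAbove (f '' s) :=
  let ⟨M, hM⟩ := hf; ⟨M, by rintro _ ⟨y, hy, rfl⟩; exact (abs_le.mp (hM y hy)).2⟩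

theorem BoundedOn.bddBelow_image (hf : BoundedOn f s) : BddBelow (f '' s) :=
  let ⟨M, hM⟩ := hf; ⟨-M, by rintro _ ⟨y, hy, rfl⟩; exact (abs_le.mp (hM y hy)).1⟩

end BoundedOn

section LowerSum

variable {f : ℝ → ℝ} {u v w : ℝ} {n : ℕ} {x : ℕ → ℝ}

@[simp]
theorem lowerSum_zero : lowerSum f 0 x = 0 := by simp [lowerSum]

theorem lowerSum_update :
    lowerSum f (n + 1) (Function.update x (n + 1) w) =
      lowerSum f n x + sInf (f '' Icc (x n) w) * (w - x n) := by
  rw [lowerSum, Finset.sum_range_succ, Function.update_self,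
    Function.update_of_ne n.succ_ne_self.symm]
  congr 1
  refine Finset.sum_congr rfl fun i hi => ?_
  have hi := Finset.mem_range.mp hi
  rw [Function.update_of_ne (show i ≠ n + 1 by omega),
    Function.update_of_ne (show i + 1 ≠ n + 1 by omega)]

theorem lowerSum_le_sSup_mul (hf : BoundedOn f (Icc u v)) (hx : IsPartition u v n x) :
    lowerSum f n x ≤ sSup (f '' Icc u v) * (v - u) := by
  have htel : v - u = ∑ i ∈ Finset.range n, (x (i + 1) - x i) := (hx.sum_sub_eq id).symm
  rw [htel, Finset.mul_sum]
  refine Finset.sum_le_sum fun i hi => ?_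
  have hi := Finset.mem_range.mp hi
  have hsub := hx.Icc_subset hi
  have hxi : x i ∈ Icc (x i) (x (i + 1)) := left_mem_Icc.mpr (hx.2.2 i hi).le
  gcongr
  · simpa using (hx.2.2 i hi).le
  calc sInf (f '' Icc (x i) (x (i + 1))) ≤ f (x i) :=
        csInf_le (hf.mono hsub).bddBelow_image (mem_image_of_mem f hxi)
    _ ≤ sSup (f '' Icc u v) := le_csSup hf.bddAbove_image (mem_image_of_mem f (hsub hxi))

end LowerSum

theorem sInf_mul_le_add {f : ℝ → ℝ} {u v w : ℝ} (hf : BddBelow (f '' Icc u w)) (huv : u ≤ v)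
    (hvw : v ≤ w) :
    sInf (f '' Icc u w) * (w - u) ≤
      sInf (f '' Icc u v) * (v - u) + sInf (f '' Icc v w) * (w - v) := by
  have hleft : sInf (f '' Icc u w) ≤ sInf (f '' Icc u v) :=
    csInf_le_csInf hf ((nonempty_Icc.mpr huv).image f) (image_mono (Icc_subset_Icc_right hvw))
  have hright : sInf (f '' Icc u w) ≤ sInf (f '' Icc v w) :=
    csInf_le_csInf hf ((nonempty_Icc.mpr hvw).image f) (image_mono (Icc_subset_Icc_left huv))
  calc sInf (f '' Icc u w) * (w - u)
      = sInf (f '' Icc u w) * (v - u) + sInf (f '' Icc u w) * (w - v) := by ring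
    _ ≤ _ := add_le_add (mul_le_mul_of_nonneg_right hleft (sub_nonneg.mpr huv))
        (mul_le_mul_of_nonneg_right hright (sub_nonneg.mpr hvw))

section LowerDarboux

variable {f : ℝ → ℝ} {u v w : ℝ} {n : ℕ} {x : ℕ → ℝ}

theorem lowerSum_le_lowerDarboux (hf : BoundedOn f (Icc u v)) (hx : IsPartition u v n x) :
    lowerSum f n x ≤ lowerDarboux f u v :=
  le_csSup ⟨_, by rintro _ ⟨m, y, hy, rfl⟩; exact lowerSum_le_sSup_mul hf hy⟩ ⟨n, x, hx, rfl⟩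

theorem lowerDarboux_le_of_forall {c : ℝ} (huv : u ≤ v)
    (h : ∀ n x, IsPartition u v n x → lowerSum f n x ≤ c) : lowerDarboux f u v ≤ c :=
  have ⟨n, x, hx⟩ := exists_isPartition huv
  csSup_le ⟨_, n, x, hx, rfl⟩ (by rintro _ ⟨n, x, hx, rfl⟩; exact h n x hx)

theorem le_upperDarboux_of_forall {c : ℝ} (huv : u ≤ v)
    (h : ∀ n x, IsPartition u v n x → c ≤ upperSum f n x) : c ≤ upperDarboux f u v :=
  have ⟨n, x, hx⟩ := exists_isPartition huv
  le_csInf ⟨_, n, x, hx, rfl⟩ (by rintro _ ⟨n, x, hx, rfl⟩; exact h n x hx)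

theorem lowerDarboux_le_sSup_mul (hf : BoundedOn f (Icc u v)) (huv : u ≤ v) :
    lowerDarboux f u v ≤ sSup (f '' Icc u v) * (v - u) :=
  lowerDarboux_le_of_forall huv fun _ _ hx => lowerSum_le_sSup_mul hf hx

@[simp]
theorem lowerDarboux_self : lowerDarboux f u u = 0 := by
  have hf : BoundedOn f (Icc u u) := ⟨|f u|, fun y hy => by rw [Icc_self] at hy; rw [hy]⟩
  refine le_antisymm ?_ ?_
  · simpa using lowerDarboux_le_sSup_mul hf le_rfl
  · simpa using lowerSum_le_lowerDarboux hf (isPartition_zero u)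

theorem lowerDarboux_add_sInf_mul_le (hf : BoundedOn f (Icc u w)) (huv : u ≤ v) (hvw : v ≤ w) :
    lowerDarboux f u v + sInf (f '' Icc v w) * (w - v) ≤ lowerDarboux f u w := by
  rcases hvw.eq_or_lt with rfl | hvw
  · simp
  rw [← le_sub_iff_add_le]
  refine lowerDarboux_le_of_forall huv fun n x hx => le_sub_iff_add_le.mpr ?_
  simpa [lowerSum_update, hx.2.1] using lowerSum_le_lowerDarboux hf (hx.update hvw)

theorem sInf_mul_le_lowerDarboux (hf : BoundedOn f (Icc u v)) (huv : u ≤ v) :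
    sInf (f '' Icc u v) * (v - u) ≤ lowerDarboux f u v := by
  simpa using lowerDarboux_add_sInf_mul_le hf le_rfl huv

theorem lowerSum_le_lowerDarboux_add (hf : BoundedOn f (Icc u w)) (hx : IsPartition u w n x)
    (huv : u ≤ v) (hvw : v ≤ w) :
    lowerSum f n x ≤ lowerDarboux f u v + lowerDarboux f v w := by
  induction n generalizing w with
  | zero =>
    obtain rfl : u = w := hx.1.symm.trans hx.2.1
    obtain rfl := le_antisymm huv hvw
    simp
  | succ n ih =>
    have hlast : x n < w := hx.2.1 ▸ hx.2.2 n n.lt_succ_self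
    rw [lowerSum, Finset.sum_range_succ, ← lowerSum, hx.2.1]
    rcases le_or_gt v (x n) with hv | hv
    · have := ih (hf.mono (Icc_subset_Icc_right hlast.le)) hx.init hv
      have := lowerDarboux_add_sInf_mul_le (hf.mono (Icc_subset_Icc_left huv)) hv hlast.le
      linarith
    · have := lowerSum_le_lowerDarboux (hf.mono (Icc_subset_Icc_right hvw)) (hx.init.update hv)
      rw [lowerSum_update] at this
      have := sInf_mul_le_add (hf.mono (Icc_subset_Icc_left hx.init.le)).bddBelow_image hv.le hvw
      have := sInf_mul_le_lowerDarboux (hf.mono (Icc_subset_Icc_left huv)) hvw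
      linarith

theorem lowerDarboux_le_add (hf : BoundedOn f (Icc u w)) (huv : u ≤ v) (hvw : v ≤ w) :
    lowerDarboux f u w ≤ lowerDarboux f u v + lowerDarboux f v w :=
  lowerDarboux_le_of_forall (huv.trans hvw) fun _ _ hx => lowerSum_le_lowerDarboux_add hf hx huv hvw

end LowerDarboux

section GenPrimitive

variable {a b u v : ℝ} {f F : ℝ → ℝ} {n : ℕ} {x : ℕ → ℝ}

theorem IsGenPrimitive.sub_mem_Icc (hF : IsGenPrimitive a b f F) (hsub : Icc u v ⊆ Icc a b)
    (huv : u < v) :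
    F v - F u ∈ Icc (sInf (f '' Icc u v) * (v - u)) (sSup (f '' Icc u v) * (v - u)) := by
  have hpos : 0 < v - u := sub_pos.mpr huv
  simpa only [mem_Icc, le_div_iff₀ hpos, div_le_iff₀ hpos] using
    hF u (hsub (left_mem_Icc.mpr huv.le)) v (hsub (right_mem_Icc.mpr huv.le)) huv

theorem IsGenPrimitive.lowerSum_le_sub (hF : IsGenPrimitive a b f F) (hsub : Icc u v ⊆ Icc a b)
    (hx : IsPartition u v n x) : lowerSum f n x ≤ F v - F u := by
  rw [← hx.sum_sub_eq F]
  refine Finset.sum_le_sum fun i hi => ?_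
  have hi := Finset.mem_range.mp hi
  exact (hF.sub_mem_Icc ((hx.Icc_subset hi).trans hsub) (hx.2.2 i hi)).1

theorem IsGenPrimitive.sub_le_upperSum (hF : IsGenPrimitive a b f F) (hsub : Icc u v ⊆ Icc a b)
    (hx : IsPartition u v n x) : F v - F u ≤ upperSum f n x := by
  rw [← hx.sum_sub_eq F]
  refine Finset.sum_le_sum fun i hi => ?_
  have hi := Finset.mem_range.mp hi
  exact (hF.sub_mem_Icc ((hx.Icc_subset hi).trans hsub) (hx.2.2 i hi)).2

theorem IsGenPrimitive.sub_eq_lowerDarboux (hf : RiemannIntegrableOn f a b)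
    (hF : IsGenPrimitive a b f F) (hau : a ≤ u) (huv : u ≤ v) (hvb : v ≤ b) :
    F v - F u = lowerDarboux f u v := by
  have hab : a ≤ b := hau.trans (huv.trans hvb)
  have hlower : ∀ p q, a ≤ p → p ≤ q → q ≤ b → lowerDarboux f p q ≤ F q - F p :=
    fun p q hap hpq hqb => lowerDarboux_le_of_forall hpq fun _ _ hx =>
      hF.lowerSum_le_sub (Icc_subset_Icc hap hqb) hx
  have htotal : F b - F a ≤ lowerDarboux f a b :=
    hf.2 ▸ le_upperDarboux_of_forall hab fun _ _ hx => hF.sub_le_upperSum subset_rfl hx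
  have hsplit : lowerDarboux f a b ≤
      lowerDarboux f a u + (lowerDarboux f u v + lowerDarboux f v b) :=
    (lowerDarboux_le_add hf.1 hau (huv.trans hvb)).trans <| add_le_add le_rfl
      (lowerDarboux_le_add (hf.1.mono (Icc_subset_Icc_left hau)) huv hvb)
  linarith [hlower a u le_rfl hau (huv.trans hvb), hlower u v hau huv hvb,
    hlower v b (hau.trans huv) hvb le_rfl]

end GenPrimitive

theorem genPrimitive_iff_indefinite_integral_general (a b : ℝ) (f F : ℝ → ℝ)
    (hf : RiemannIntegrableOn f a b) :
    IsGenPrimitive a b f F ↔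
      ∀ x₀ ∈ Set.Icc a b, ∃ c : ℝ, ∀ x ∈ Set.Icc a b,
        F x = c + riemannIntegral f x₀ x := by
  constructor
  · intro hF x₀ hx₀
    refine ⟨F x₀, fun x hx => ?_⟩
    unfold riemannIntegral
    split_ifs with h
    · linarith [hF.sub_eq_lowerDarboux hf hx₀.1 h hx.2]
    · linarith [hF.sub_eq_lowerDarboux hf hx.1 (not_le.mp h).le hx₀.2]
  · intro h p hp q hq hpq
    obtain ⟨c, hc⟩ := h p hp
    have hinc : F q - F p = lowerDarboux f p q := by
      simp [hc q hq, hc p hp, riemannIntegral, hpq.le]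
    have hpos : 0 < q - p := sub_pos.mpr hpq
    have hfpq := hf.1.mono (Icc_subset_Icc hp.1 hq.2)
    rw [hinc, le_div_iff₀ hpos, div_le_iff₀ hpos]
    exact ⟨sInf_mul_le_lowerDarboux hfpq hpq.le, lowerDarboux_le_sSup_mul hfpq hpq.le⟩

/-- If `f` is Riemann integrable on `[a, b]`, then `F` is a generalized primitive of `f`
if and only if for each `x₀ ∈ [a, b]` there is a constant `c` with
`F x = c + ∫_{x₀}^x f` for all `x ∈ [a, b]`. -/
theorem genPrimitive_iff_indefinite_integral (a b : ℝ) (hab : a ≤ b) (f F : ℝ → ℝ)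
    (hf : RiemannIntegrableOn f a b) :
    IsGenPrimitive a b f F ↔
      ∀ x₀ ∈ Set.Icc a b, ∃ c : ℝ, ∀ x ∈ Set.Icc a b,
        F x = c + riemannIntegral f x₀ x :=
  genPrimitive_iff_indefinite_integral_general a b f F hf
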